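/- arXiv:1408.4554 — 3 statements merged into one kernel-verified Lean document; each statement's English description precedes it below -/
import Mathlib

section
/- Let {π_j : G → U(H_j)}_{j∈J} be an arbitrary family of continuous unitary representations of a topological group G such that I_{π_j} is convex for every j ∈ J, and let π := ⊕_{j∈J} π_j be the direct sum representation on the Hilbert space direct sum (ℓ²-sum) of the family {H_j}_{j∈J}. Then I_π = closure(conv(∪_{j∈J} I_{π_j})), and in particular I_π is convex. -/
open Filter Topology MeasureTheory
open scoped Topology

noncomputable section

/-- The set of continuous one-parameter subgroups of a topological group `G`,
topologized as a subspace of `C(ℝ, G)` (compact-open topology, i.e. topology of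
uniform convergence on compact subsets of `ℝ`). -/
def OneParam (G : Type*) [TopologicalSpace G] [Group G] : Type _ :=
  {γ : C(ℝ, G) // ∀ t s : ℝ, γ (t + s) = γ t * γ s}

instance (G : Type*) [TopologicalSpace G] [Group G] : TopologicalSpace (OneParam G) :=
  inferInstanceAs (TopologicalSpace {γ : C(ℝ, G) // ∀ t s : ℝ, γ (t + s) = γ t * γ s})

section DirDeriv

variable {G : Type*} [TopologicalSpace G] [Group G]
variable {Y : Type*} [TopologicalSpace Y] [AddCommGroup Y] [Module ℝ Y]

/-- `φ` has directional derivative `w` at `g` along the one-parameter subgroup `γ`: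
`w = lim_{t → 0} (φ(g·γ(t)) - φ(g))/t`. -/
def HasDirDerivAt (φ : G → Y) (γ : OneParam G) (g : G) (w : Y) : Prop :=
  Tendsto (fun t : ℝ => t⁻¹ • (φ (g * γ.1 t) - φ g)) (𝓝[≠] (0 : ℝ)) (𝓝 w)

/-- The directional derivative `(D_γ φ)(g) = lim_{t → 0} (φ(g·γ(t)) - φ(g))/t`
(junk value if the limit does not exist). -/
def dirDeriv (φ : G → Y) (γ : OneParam G) (g : G) : Y :=
  haveI : Nonempty Y := ⟨0⟩
  limUnder (𝓝[≠] (0 : ℝ)) (fun t : ℝ => t⁻¹ • (φ (g * γ.1 t) - φ g))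

/-- The right directional derivative `(D^R_γ φ)(g) = lim_{t → 0} (φ(γ(-t)·g) - φ(g))/t`. -/
def rightDirDeriv (φ : G → Y) (γ : OneParam G) (g : G) : Y :=
  haveI : Nonempty Y := ⟨0⟩
  limUnder (𝓝[≠] (0 : ℝ)) (fun t : ℝ => t⁻¹ • (φ (γ.1 (-t) * g) - φ g))

/-- Iterated directional derivatives: `iteratedD φ k γ g = (D_{γ k}(⋯(D_{γ 1} φ)⋯))(g)`,
with the innermost derivative taken along `γ 0`. -/
def iteratedD (φ : G → Y) : (k : ℕ) → (Fin k → OneParam G) → G → Y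
  | 0, _ => φ
  | (k + 1), γ => dirDeriv (iteratedD φ k (fun i => γ i.castSucc)) (γ (Fin.last k))

/-- `φ ∈ C^∞(G, Y)`: `φ` is continuous and all of its iterated directional derivatives
exist everywhere and are jointly continuous. -/
def IsCSmooth (φ : G → Y) : Prop :=
  Continuous φ ∧ ∀ k : ℕ,
    (∀ (γ : Fin (k + 1) → OneParam G) (g : G),
      HasDirDerivAt (iteratedD φ k (fun i => γ i.castSucc)) (γ (Fin.last k)) g
        (iteratedD φ (k + 1) γ g)) ∧
    Continuous (fun p : (Fin (k + 1) → OneParam G) × G => iteratedD φ (k + 1) p.1 p.2)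

theorem IsCSmooth.continuous_iteratedD {φ : G → Y} (hφ : IsCSmooth φ) (k : ℕ) :
    Continuous (fun p : (Fin k → OneParam G) × G => iteratedD φ k p.1 p.2) := by
  cases k with
  | zero => exact hφ.1.comp continuous_snd
  | succ k => exact (hφ.2 k).2

end DirDeriv

/-- A continuous unitary representation of a topological group `G` on a complex
Hilbert space `H`. -/
structure UnitaryRep (G : Type*) (H : Type*) [TopologicalSpace G] [Group G]
    [NormedAddCommGroup H] [InnerProductSpace ℂ H] where
  toFun : G → H →L[ℂ] H
  map_one' : toFun 1 = 1
  map_mul' : ∀ x y : G, toFun (x * y) = (toFun x).comp (toFun y)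
  inner_map' : ∀ (x : G) (v w : H), (inner ℂ (toFun x v) (toFun x w) : ℂ) = inner ℂ v w
  surjective' : ∀ x : G, Function.Surjective (toFun x)
  continuous' : Continuous fun p : G × H => toFun p.1 p.2

namespace UnitaryRep

variable {G : Type*} [TopologicalSpace G] [Group G]
variable {H : Type*} [NormedAddCommGroup H] [InnerProductSpace ℂ H]

/-- The space of smooth vectors `H_∞` of a representation. -/
def smoothVec (π : UnitaryRep G H) : Set H :=
  {v : H | IsCSmooth fun g : G => π.toFun g v}

/-- `dπ(γ)v = lim_{t → 0} (π(γ(t))v - v)/t`. -/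
def dpi (π : UnitaryRep G H) (γ : OneParam G) (v : H) : H :=
  dirDeriv (fun g : G => π.toFun g v) γ 1

/-- The moment map `Ψ_π(v)(γ) = (1/i)⟨dπ(γ)v, v⟩/⟨v, v⟩`, viewed as an element of
`ℝ^{𝔏(G)}`. -/
def momentMap (π : UnitaryRep G H) (v : H) : OneParam G → ℝ :=
  fun γ => ((inner ℂ v (π.dpi γ v) : ℂ) / (inner ℂ v v : ℂ) / Complex.I).re

/-- The image `I⁰_π = Ψ_π(H_∞ \ {0})` of the moment map. -/
def momentSet0 (π : UnitaryRep G H) : Set (OneParam G → ℝ) :=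
  π.momentMap '' (π.smoothVec \ {0})

/-- The closed moment set `I_π`, the closure of `I⁰_π` in `ℝ^{𝔏(G)}` with the
topology of pointwise convergence. -/
def momentSet (π : UnitaryRep G H) : Set (OneParam G → ℝ) :=
  closure π.momentSet0

end UnitaryRep

end

/-!
For a smooth vector `v` of the direct sum, each coordinate `v j` is smooth and `dπ(γ)v` is
computed coordinatewise, so `‖v‖² Ψ_π(v) = ∑ⱼ ‖v j‖² Ψ_{πⱼ}(v j)`; normalising the partial sums
exhibits `Ψ_π(v)` as a limit of convex combinations of points of the `I_{πⱼ}`. Conversely, since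
`Ψ_{πⱼ}` is invariant under scaling, a convex combination `∑ⱼ wⱼ Ψ_{πⱼ}(xⱼ)` over finitely many
distinct indices is `Ψ_π(v)` for the vector `v` with coordinates `√wⱼ xⱼ / ‖xⱼ‖`. Convexity of the
`I_{πⱼ}` is what allows an arbitrary convex combination of points of `⋃ⱼ I_{πⱼ}` to be regrouped
into one with a single point per index; closures are then handled by continuity.
-/

section DirDerivCalculus

variable {G : Type*} [TopologicalSpace G] [Group G]
variable {Y : Type*} [NormedAddCommGroup Y] [NormedSpace ℝ Y]
variable {Z : Type*} [NormedAddCommGroup Z] [NormedSpace ℝ Z]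

theorem HasDirDerivAt.dirDeriv_eq {φ : G → Y} {γ : OneParam G} {g : G} {w : Y}
    (h : HasDirDerivAt φ γ g w) : dirDeriv φ γ g = w :=
  h.limUnder_eq

theorem HasDirDerivAt.clm_apply {φ : G → Y} {γ : OneParam G} {g : G} {w : Y}
    (h : HasDirDerivAt φ γ g w) (T : Y →L[ℝ] Z) :
    HasDirDerivAt (fun x => T (φ x)) γ g (T w) :=
  ((T.continuous.tendsto w).comp h).congr fun t => by simp

theorem HasDirDerivAt.add {φ ψ : G → Y} {γ : OneParam G} {g : G} {w w' : Y}
    (h : HasDirDerivAt φ γ g w) (h' : HasDirDerivAt ψ γ g w') :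
    HasDirDerivAt (fun x => φ x + ψ x) γ g (w + w') :=
  (Tendsto.add h h').congr fun t => by rw [← smul_add, add_sub_add_comm]

theorem IsCSmooth.iteratedD_clm_apply {φ : G → Y} (hφ : IsCSmooth φ) (T : Y →L[ℝ] Z) :
    ∀ (k : ℕ) (γ : Fin k → OneParam G),
      iteratedD (fun x => T (φ x)) k γ = fun x => T (iteratedD φ k γ x)
  | 0, _ => rfl
  | k + 1, γ => funext fun g => by
    rw [iteratedD, hφ.iteratedD_clm_apply T k]
    exact (((hφ.2 k).1 γ g).clm_apply T).dirDeriv_eq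

theorem IsCSmooth.clm_apply {φ : G → Y} (hφ : IsCSmooth φ) (T : Y →L[ℝ] Z) :
    IsCSmooth (fun x => T (φ x)) := by
  refine ⟨T.continuous.comp hφ.1, fun k => ⟨fun γ g => ?_, ?_⟩⟩
  · simp only [hφ.iteratedD_clm_apply T]
    exact ((hφ.2 k).1 γ g).clm_apply T
  · simp only [hφ.iteratedD_clm_apply T]
    exact T.continuous.comp (hφ.2 k).2

theorem IsCSmooth.iteratedD_add {φ ψ : G → Y} (hφ : IsCSmooth φ) (hψ : IsCSmooth ψ) :
    ∀ (k : ℕ) (γ : Fin k → OneParam G),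
      iteratedD (fun x => φ x + ψ x) k γ = fun x => iteratedD φ k γ x + iteratedD ψ k γ x
  | 0, _ => rfl
  | k + 1, γ => funext fun g => by
    rw [iteratedD, hφ.iteratedD_add hψ k]
    exact (((hφ.2 k).1 γ g).add ((hψ.2 k).1 γ g)).dirDeriv_eq

theorem IsCSmooth.add {φ ψ : G → Y} (hφ : IsCSmooth φ) (hψ : IsCSmooth ψ) :
    IsCSmooth (fun x => φ x + ψ x) := by
  refine ⟨hφ.1.add hψ.1, fun k => ⟨fun γ g => ?_, ?_⟩⟩
  · simp only [hφ.iteratedD_add hψ]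
    exact ((hφ.2 k).1 γ g).add ((hψ.2 k).1 γ g)
  · simp only [hφ.iteratedD_add hψ]
    exact (hφ.2 k).2.add (hψ.2 k).2

end DirDerivCalculus

namespace UnitaryRep

variable {G : Type*} [TopologicalSpace G] [Group G]
variable {H : Type*} [NormedAddCommGroup H] [InnerProductSpace ℂ H]
variable {K : Type*} [NormedAddCommGroup K] [InnerProductSpace ℂ K]

theorem hasDirDerivAt_dpi (π : UnitaryRep G H) {v : H} (hv : v ∈ π.smoothVec)
    (γ : OneParam G) : HasDirDerivAt (fun g => π.toFun g v) γ 1 (π.dpi γ v) := by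
  have h := (hv.2 0).1 (fun _ => γ) 1
  rwa [← h.dirDeriv_eq] at h

section Intertwining

variable {π : UnitaryRep G H} {ρ : UnitaryRep G K} (T : H →L[ℂ] K) {v : H}

theorem map_mem_smoothVec (hv : v ∈ π.smoothVec)
    (hT : ∀ g, ρ.toFun g (T v) = T (π.toFun g v)) : T v ∈ ρ.smoothVec := by
  show IsCSmooth fun g => ρ.toFun g (T v)
  simp only [hT]
  exact hv.clm_apply (T.restrictScalars ℝ)

theorem dpi_map (hv : v ∈ π.smoothVec) (hT : ∀ g, ρ.toFun g (T v) = T (π.toFun g v))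
    (γ : OneParam G) : ρ.dpi γ (T v) = T (π.dpi γ v) := by
  have h := (π.hasDirDerivAt_dpi hv γ).clm_apply (T.restrictScalars ℝ)
  simp only [ContinuousLinearMap.coe_restrictScalars', ← hT] at h
  exact h.dirDeriv_eq

end Intertwining

variable {π : UnitaryRep G H} {v w : H}

theorem add_mem_smoothVec (hv : v ∈ π.smoothVec) (hw : w ∈ π.smoothVec) :
    v + w ∈ π.smoothVec := by
  show IsCSmooth fun g => π.toFun g (v + w)
  simp only [map_add]
  exact hv.add hw

theorem smul_mem_smoothVec (hv : v ∈ π.smoothVec) (c : ℂ) : c • v ∈ π.smoothVec :=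
  map_mem_smoothVec (c • ContinuousLinearMap.id ℂ H) hv fun g => by simp

theorem dpi_smul (hv : v ∈ π.smoothVec) (c : ℂ) (γ : OneParam G) :
    π.dpi γ (c • v) = c • π.dpi γ v :=
  dpi_map (c • ContinuousLinearMap.id ℂ H) hv (fun g => by simp) γ

theorem momentMap_smul (hv : v ∈ π.smoothVec) {c : ℂ} (hc : c ≠ 0) :
    π.momentMap (c • v) = π.momentMap v := by
  funext γ
  have hc' : c * (starRingEnd ℂ) c ≠ 0 := mul_ne_zero hc ((map_ne_zero _).2 hc)
  simp only [momentMap, dpi_smul hv, inner_smul_left, inner_smul_right, ← mul_assoc]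
  rw [mul_div_mul_left _ _ hc']

theorem norm_sq_smul_momentMap (π : UnitaryRep G H) (v : H) :
    ‖v‖ ^ 2 • π.momentMap v = fun γ => (inner ℂ v (π.dpi γ v) / Complex.I).re := by
  funext γ
  rcases eq_or_ne v 0 with rfl | hv
  · simp
  have hvv : inner ℂ v v = ((‖v‖ ^ 2 : ℝ) : ℂ) := by
    rw [inner_self_eq_norm_sq_to_K]; norm_cast
  rw [Pi.smul_apply, smul_eq_mul, momentMap, hvv, div_right_comm, Complex.div_ofReal_re]
  field_simp

end UnitaryRep

theorem lp.hasSum_norm_sq {ι : Type*} {E : ι → Type*} [∀ i, NormedAddCommGroup (E i)]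
    (f : lp E 2) : HasSum (fun i => ‖f i‖ ^ 2) (‖f‖ ^ 2) := by
  simpa using lp.hasSum_norm (p := 2) (by norm_num) f

section ConvexHull

variable {ι E : Type*} [AddCommGroup E] [Module ℝ E] {s : Set E}

theorem mem_closure_convexHull_of_hasSum [TopologicalSpace E] [IsTopologicalAddGroup E]
    [ContinuousSMul ℝ E] {w : ι → ℝ} {z : ι → E} {W : ℝ} {x : E} (hw₀ : ∀ i, 0 ≤ w i)
    (hz : ∀ i, w i ≠ 0 → z i ∈ s) (hW : HasSum w W) (hW₀ : 0 < W)
    (hx : HasSum (fun i => w i • z i) (W • x)) : x ∈ closure (convexHull ℝ s) := by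
  classical
  have hmem : ∀ t : Finset ι, 0 < ∑ i ∈ t, w i → t.centerMass w z ∈ convexHull ℝ s := by
    intro t ht
    rw [← Finset.centerMass_filter_ne_zero]
    refine Finset.centerMass_mem_convexHull _ (fun i _ => hw₀ i) ?_
      (fun i hi => hz i (Finset.mem_filter.1 hi).2)
    rwa [Finset.sum_filter_ne_zero]
  have hlim : Tendsto (fun t : Finset ι => t.centerMass w z) atTop (𝓝 x) := by
    simpa [Finset.centerMass, inv_smul_smul₀ hW₀.ne'] using (hW.inv₀ hW₀.ne').smul hx
  exact mem_closure_of_tendsto hlim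
    ((hW.eventually (lt_mem_nhds hW₀)).mono fun t ht => hmem t ht)

theorem exists_sum_smul_eq_of_mem_convexHull_iUnion {s : ι → Set E} (hs : ∀ i, Convex ℝ (s i))
    {x : E} (hx : x ∈ convexHull ℝ (⋃ i, s i)) :
    ∃ (t : Finset ι) (w : ι → ℝ) (y : ι → E), (∀ i ∈ t, 0 < w i) ∧ ∑ i ∈ t, w i = 1 ∧
      (∀ i ∈ t, y i ∈ s i) ∧ ∑ i ∈ t, w i • y i = x := by
  classical
  rw [_root_.convexHull_eq] at hx
  obtain ⟨κ, u, p, z, hp₀, hp₁, hz, rfl⟩ := hx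
  -- after discarding the points of weight zero, every fibre of `c` below carries positive mass
  rw [← Finset.centerMass_filter_ne_zero]
  rw [← Finset.sum_filter_ne_zero] at hp₁
  set u' := {i ∈ u | p i ≠ 0}
  have hp : ∀ i ∈ u', 0 < p i := fun i hi =>
    (hp₀ i (Finset.mem_filter.1 hi).1).lt_of_ne' (Finset.mem_filter.1 hi).2
  obtain ⟨i₀, hi₀⟩ := Finset.nonempty_of_sum_ne_zero (hp₁ ▸ one_ne_zero)
  have : Nonempty ι := ⟨(Set.mem_iUnion.1 (hz i₀ (Finset.mem_filter.1 hi₀).1)).choose⟩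
  choose! c hc using fun i (hi : i ∈ u') => Set.mem_iUnion.1 (hz i (Finset.mem_filter.1 hi).1)
  have hc_maps : ∀ i ∈ u', c i ∈ u'.image c := fun i hi => Finset.mem_image_of_mem c hi
  set w := fun j => ∑ i ∈ u' with c i = j, p i
  have hw : ∀ j ∈ u'.image c, 0 < w j := by
    intro j hj
    obtain ⟨i, hi, rfl⟩ := Finset.mem_image.1 hj
    exact Finset.sum_pos (fun k hk => hp k (Finset.mem_filter.1 hk).1)
      ⟨i, Finset.mem_filter.2 ⟨hi, rfl⟩⟩
  refine ⟨u'.image c, w, fun j => {i ∈ u' | c i = j}.centerMass p z, hw, ?_, ?_, ?_⟩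
  · rwa [Finset.sum_fiberwise_of_maps_to hc_maps]
  · intro j hj
    refine (hs j).centerMass_mem (fun i hi => (hp i (Finset.mem_filter.1 hi).1).le) (hw j hj)
      fun i hi => ?_
    obtain ⟨hiu, rfl⟩ := Finset.mem_filter.1 hi
    exact hc i hiu
  · rw [Finset.centerMass_eq_of_sum_1 _ _ hp₁, ← Finset.sum_fiberwise_of_maps_to hc_maps]
    refine Finset.sum_congr rfl fun j hj => ?_
    simp only [Finset.centerMass]
    rw [smul_inv_smul₀ (hw j hj).ne']

end ConvexHull

namespace UnitaryRep

variable {G : Type*} [TopologicalSpace G] [Group G] {J : Type*} {Hs : J → Type*}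
  [∀ j, NormedAddCommGroup (Hs j)] [∀ j, InnerProductSpace ℂ (Hs j)]

/-- `π` is the Hilbert direct sum `⊕ⱼ πⱼ` on `ℓ²(J, Hs)`. -/
def IsDirectSum (π : UnitaryRep G (lp Hs 2)) (πj : ∀ j, UnitaryRep G (Hs j)) : Prop :=
  ∀ (g : G) (v : lp Hs 2) (j : J), π.toFun g v j = (πj j).toFun g (v j)

namespace IsDirectSum

variable {π : UnitaryRep G (lp Hs 2)} {πj : ∀ j, UnitaryRep G (Hs j)} {v : lp Hs 2}

theorem apply_mem_smoothVec (hπ : π.IsDirectSum πj) (hv : v ∈ π.smoothVec) (j : J) :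
    v j ∈ (πj j).smoothVec :=
  map_mem_smoothVec (lp.evalCLM ℂ Hs 2 j) hv fun g => (hπ g v j).symm

theorem dpi_apply (hπ : π.IsDirectSum πj) (hv : v ∈ π.smoothVec) (γ : OneParam G) (j : J) :
    π.dpi γ v j = (πj j).dpi γ (v j) :=
  (dpi_map (lp.evalCLM ℂ Hs 2 j) hv (fun g => (hπ g v j).symm) γ).symm

theorem single_mem_smoothVec [DecidableEq J] (hπ : π.IsDirectSum πj) {j : J} {x : Hs j}
    (hx : x ∈ (πj j).smoothVec) : lp.single 2 j x ∈ π.smoothVec := by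
  refine map_mem_smoothVec (lp.singleContinuousLinearMap ℂ Hs 2 j) hx fun g => lp.ext ?_
  funext k
  rw [lp.singleContinuousLinearMap_apply, hπ g]
  rcases eq_or_ne k j with rfl | hk
  · simp
  · simp [hk]

theorem hasSum_norm_sq_smul_momentMap (hπ : π.IsDirectSum πj) (hv : v ∈ π.smoothVec) :
    HasSum (fun j => ‖v j‖ ^ 2 • (πj j).momentMap (v j)) (‖v‖ ^ 2 • π.momentMap v) := by
  simp only [norm_sq_smul_momentMap]
  refine Pi.hasSum.2 fun γ => ?_
  simp only [← hπ.dpi_apply hv]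
  exact Complex.hasSum_re ((lp.hasSum_inner v (π.dpi γ v)).div_const Complex.I)

theorem momentMap_mem_closure_convexHull (hπ : π.IsDirectSum πj) (hv : v ∈ π.smoothVec)
    (hv₀ : v ≠ 0) : π.momentMap v ∈ closure (convexHull ℝ (⋃ j, (πj j).momentSet)) := by
  refine mem_closure_convexHull_of_hasSum (fun j => sq_nonneg _) (fun j hj => ?_)
    (lp.hasSum_norm_sq v) (by positivity) (hπ.hasSum_norm_sq_smul_momentMap hv)
  exact Set.mem_iUnion.2
    ⟨j, subset_closure ⟨v j, ⟨hπ.apply_mem_smoothVec hv j, by simpa using hj⟩, rfl⟩⟩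

theorem sum_smul_mem_momentSet0 (hπ : π.IsDirectSum πj) {t : Finset J} {w : J → ℝ}
    (hw : ∀ j ∈ t, 0 < w j) (hw₁ : ∑ j ∈ t, w j = 1) {y : J → OneParam G → ℝ}
    (hy : ∀ j ∈ t, y j ∈ (πj j).momentSet0) : ∑ j ∈ t, w j • y j ∈ π.momentSet0 := by
  classical
  choose! x hx hxy using hy
  have hx₀ : ∀ j ∈ t, ‖x j‖ ≠ 0 := fun j hj => by simpa using (hx j hj).2
  set c : J → ℂ := fun j => ((√(w j) / ‖x j‖ : ℝ) : ℂ)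
  have hc : ∀ j ∈ t, c j ≠ 0 := fun j hj =>
    Complex.ofReal_ne_zero.2 (div_ne_zero (Real.sqrt_ne_zero'.2 (hw j hj)) (hx₀ j hj))
  set v : lp Hs 2 := ∑ j ∈ t, lp.single 2 j (c j • x j)
  have hv_apply : ∀ j, v j = if j ∈ t then c j • x j else 0 := fun j => by
    simp only [v, lp.coeFn_sum, Finset.sum_apply, lp.single_apply, Finset.sum_pi_single]
  have hv_out : ∀ j ∉ t, v j = 0 := fun j hj => by rw [hv_apply, if_neg hj]
  have hnorm_in : ∀ j ∈ t, ‖v j‖ ^ 2 = w j := fun j hj => by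
    rw [hv_apply, if_pos hj, norm_smul, Complex.norm_real, Real.norm_of_nonneg (by positivity),
      div_mul_cancel₀ _ (hx₀ j hj), Real.sq_sqrt (hw j hj).le]
  have hv : v ∈ π.smoothVec :=
    Finset.sum_induction_nonempty _ _ (fun _ _ => add_mem_smoothVec)
      (Finset.nonempty_of_sum_ne_zero (hw₁ ▸ one_ne_zero))
      fun j hj => hπ.single_mem_smoothVec (smul_mem_smoothVec (hx j hj).1 _)
  have hnorm : ‖v‖ ^ 2 = 1 := by
    refine (lp.hasSum_norm_sq v).unique ?_
    rw [← hw₁, ← Finset.sum_congr rfl hnorm_in]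
    exact hasSum_sum_of_ne_finset_zero fun j hj => by simp [hv_out j hj]
  have hmoment : π.momentMap v = ∑ j ∈ t, w j • y j := by
    have h := (hπ.hasSum_norm_sq_smul_momentMap hv).unique
      (hasSum_sum_of_ne_finset_zero (s := t) fun j hj => by simp [hv_out j hj])
    rw [hnorm, one_smul] at h
    rw [h]
    refine Finset.sum_congr rfl fun j hj => ?_
    rw [hnorm_in j hj, hv_apply, if_pos hj, momentMap_smul (hx j hj).1 (hc j hj), hxy j hj]
  refine ⟨v, ⟨hv, fun hv₀ => ?_⟩, hmoment⟩
  simp [Set.mem_singleton_iff.1 hv₀] at hnorm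

theorem sum_smul_mem_momentSet (hπ : π.IsDirectSum πj) {t : Finset J} {w : J → ℝ}
    (hw : ∀ j ∈ t, 0 < w j) (hw₁ : ∑ j ∈ t, w j = 1) {y : J → OneParam G → ℝ}
    (hy : ∀ j ∈ t, y j ∈ (πj j).momentSet) : ∑ j ∈ t, w j • y j ∈ π.momentSet := by
  have hΦ : Continuous fun u : J → OneParam G → ℝ => ∑ j ∈ t, w j • u j := by fun_prop
  have hy' : y ∈ closure ((t : Set J).pi fun j => (πj j).momentSet0) := by
    rw [closure_pi_set]
    exact hy
  refine closure_mono ?_ (image_closure_subset_closure_image hΦ ⟨y, hy', rfl⟩)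
  rintro _ ⟨u, hu, rfl⟩
  exact hπ.sum_smul_mem_momentSet0 hw hw₁ hu

end IsDirectSum

end UnitaryRep

theorem momentSet_directSum_general
    (G : Type*) [TopologicalSpace G] [Group G]
    (J : Type*) (Hs : J → Type*)
    [∀ j, NormedAddCommGroup (Hs j)] [∀ j, InnerProductSpace ℂ (Hs j)]
    (πj : ∀ j : J, UnitaryRep G (Hs j))
    (hconv : ∀ j : J, Convex ℝ (πj j).momentSet)
    (π : UnitaryRep G (lp Hs 2))
    (hπ : ∀ (x : G) (v : lp Hs 2) (j : J), (π.toFun x v) j = (πj j).toFun x (v j)) :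
    π.momentSet = closure (convexHull ℝ (⋃ j : J, (πj j).momentSet)) ∧
      Convex ℝ π.momentSet := by
  have hπ : π.IsDirectSum πj := hπ
  have hsub : π.momentSet ⊆ closure (convexHull ℝ (⋃ j, (πj j).momentSet)) := by
    refine closure_minimal ?_ isClosed_closure
    rintro _ ⟨v, ⟨hv, hv₀⟩, rfl⟩
    exact hπ.momentMap_mem_closure_convexHull hv hv₀
  have hsup : closure (convexHull ℝ (⋃ j, (πj j).momentSet)) ⊆ π.momentSet := by
    refine closure_minimal (fun x hx => ?_) isClosed_closure
    obtain ⟨t, w, y, hw, hw₁, hy, rfl⟩ := exists_sum_smul_eq_of_mem_convexHull_iUnion hconv hx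
    exact hπ.sum_smul_mem_momentSet hw hw₁ hy
  have heq := hsub.antisymm hsup
  exact ⟨heq, heq ▸ (convex_convexHull ℝ _).closure⟩

/-- For an arbitrary Hilbert (ℓ²) direct sum `π = ⊕_{j ∈ J} π_j` of continuous unitary
representations with all `I_{π_j}` convex, one has
`I_π = closure (conv (⋃_j I_{π_j}))`; in particular `I_π` is convex. -/
theorem momentSet_directSum
    (G : Type*) [TopologicalSpace G] [Group G]
    (J : Type*) (Hs : J → Type*)
    [∀ j, NormedAddCommGroup (Hs j)] [∀ j, InnerProductSpace ℂ (Hs j)]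
    [∀ j, CompleteSpace (Hs j)]
    (πj : ∀ j : J, UnitaryRep G (Hs j))
    (hconv : ∀ j : J, Convex ℝ (πj j).momentSet)
    (π : UnitaryRep G (lp Hs 2))
    (hπ : ∀ (x : G) (v : lp Hs 2) (j : J), (π.toFun x v) j = (πj j).toFun x (v j)) :
    π.momentSet = closure (convexHull ℝ (⋃ j : J, (πj j).momentSet)) ∧
      Convex ℝ π.momentSet :=
  momentSet_directSum_general G J Hs πj hconv π hπ
end

section
/- Let φ : G₁ → G₂ be a continuous homomorphism of topological groups, 𝔏(φ) : 𝔏(G₁) → 𝔏(G₂), γ ↦ φ∘γ, and P : ℝ^{𝔏(G₂)} → ℝ^{𝔏(G₁)}, P(f) := f ∘ 𝔏(φ). Let π : G₂ → U(H) be a continuous unitary representation, and denote by H_∞(π) and H_∞(π∘φ) the spaces of smooth vectors of π and of π∘φ : G₁ → U(H), respectively. Then H_∞(π) ⊆ H_∞(π∘φ) and P(I⁰_π) ⊆ I⁰_{π∘φ}. If moreover H_∞(π) is dense in H_∞(π∘φ) with respect to the topology of H_∞(π∘φ), then closure(P(I_π)) = I_{π∘φ}; if in addition I_π is convex, then I_{π∘φ}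 is convex. -/
open Filter Topology MeasureTheory
open scoped Topology

noncomputable section

/-- The space `C^∞(G, Y)` of smooth functions, topologized below by uniform convergence
of all iterated directional derivatives on compact sets (this coincides with the locally
convex topology given by the seminorms `p_{K₁,K₂}`). -/
def SmoothFns (G : Type*) [TopologicalSpace G] [Group G]
    (Y : Type*) [TopologicalSpace Y] [AddCommGroup Y] [Module ℝ Y] : Type _ :=
  {φ : G → Y // IsCSmooth φ}

variable {G : Type*} [TopologicalSpace G] [Group G]
variable {Y : Type*} [TopologicalSpace Y] [AddCommGroup Y] [Module ℝ Y]

/-- The `k`-th iterated derivative of a smooth function, as a continuous map. -/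
def SmoothFns.iteratedDCM (f : SmoothFns G Y) (k : ℕ) :
    C((Fin k → OneParam G) × G, Y) :=
  ⟨fun p => iteratedD f.1 k p.1 p.2, f.2.continuous_iteratedD k⟩

/-- The topology of `C^∞(G, Y)`: the coarsest topology making all the maps
`f ↦ D^k f ∈ C(𝔏(G)^k × G, Y)` continuous, where the spaces of continuous maps carry the
compact-open topology (the topology of uniform convergence on compact sets). -/
instance : TopologicalSpace (SmoothFns G Y) :=
  ⨅ k : ℕ, TopologicalSpace.induced (fun f : SmoothFns G Y => f.iteratedDCM k)
    inferInstance

namespace UnitaryRep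

variable {H : Type*} [NormedAddCommGroup H] [InnerProductSpace ℂ H]

/-- The space of smooth vectors `H_∞`, as a type. -/
def SmoothVecs (π : UnitaryRep G H) : Type _ := {v : H // v ∈ π.smoothVec}

/-- The canonical injection `A : H_∞ → C^∞(G, H)`, `v ↦ π(·)v`. -/
def smoothVecEmbed (π : UnitaryRep G H) (v : π.SmoothVecs) : SmoothFns G H :=
  ⟨fun g : G => π.toFun g v.1, v.2⟩

/-- The topology of the space of smooth vectors: the topology induced from `C^∞(G, H)`
via `A : v ↦ π(·)v`. -/
instance (π : UnitaryRep G H) : TopologicalSpace π.SmoothVecs :=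
  TopologicalSpace.induced π.smoothVecEmbed inferInstance

end UnitaryRep

end
noncomputable section

/-- The functor `𝔏`: a continuous homomorphism `φ : G₁ → G₂` induces a map
`𝔏(φ) : 𝔏(G₁) → 𝔏(G₂)`, `γ ↦ φ ∘ γ`. -/
def OneParam.map {G₁ G₂ : Type*} [TopologicalSpace G₁] [Group G₁]
    [TopologicalSpace G₂] [Group G₂]
    (φ : G₁ →* G₂) (hφ : Continuous φ) (γ : OneParam G₁) : OneParam G₂ :=
  ⟨⟨fun t : ℝ => φ (γ.1 t), hφ.comp γ.1.continuous⟩,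
    fun t s => by simp only [ContinuousMap.coe_mk, γ.2 t s, map_mul]⟩

/-- The pull-back `π ∘ φ` of a representation along a continuous homomorphism. -/
def UnitaryRep.comp {G₁ G₂ : Type*} [TopologicalSpace G₁] [Group G₁]
    [TopologicalSpace G₂] [Group G₂]
    {H : Type*} [NormedAddCommGroup H] [InnerProductSpace ℂ H]
    (π : UnitaryRep G₂ H) (φ : G₁ →* G₂) (hφ : Continuous φ) : UnitaryRep G₁ H where
  toFun := fun x : G₁ => π.toFun (φ x)
  map_one' := by simpa using π.map_one'
  map_mul' := fun x y => by simpa using π.map_mul' (φ x) (φ y)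
  inner_map' := fun x v w => π.inner_map' (φ x) v w
  surjective' := fun x => π.surjective' (φ x)
  continuous' := π.continuous'.comp ((hφ.comp continuous_fst).prodMk continuous_snd)

end

/-! Directional derivatives of `f ∘ φ` along `γ` are those of `f` along `φ ∘ γ`, so smoothness
pulls back along `φ` and `Ψ_{π∘φ}(v) = P(Ψ_π(v))` for `v ∈ H_∞(π)`. As `Ψ_{π∘φ}` is continuous on
`H_∞(π∘φ) \ {0}` for the topology of `H_∞(π∘φ)`, density of `H_∞(π)` there puts `I⁰_{π∘φ}` in the
closure of `P(I⁰_π)`. Convexity survives the linear map `P` and closures. -/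

section PullBack

variable {G₁ G₂ : Type*} [TopologicalSpace G₁] [Group G₁] [TopologicalSpace G₂] [Group G₂]
variable {Y : Type*} [TopologicalSpace Y] [AddCommGroup Y] [Module ℝ Y]

theorem OneParam.continuous_map (φ : G₁ →* G₂) (hφ : Continuous φ) :
    Continuous (OneParam.map φ hφ) :=
  ((ContinuousMap.continuous_postcomp ⟨φ, hφ⟩).comp continuous_subtype_val).subtype_mk _

@[simp]
theorem OneParam.map_apply (φ : G₁ →* G₂) (hφ : Continuous φ) (γ : OneParam G₁) (t : ℝ) :
    (OneParam.map φ hφ γ).1 t = φ (γ.1 t) :=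
  rfl

theorem dirDeriv_comp_monoidHom (φ : G₁ →* G₂) (hφ : Continuous φ) (f : G₂ → Y)
    (γ : OneParam G₁) (g : G₁) :
    dirDeriv (f ∘ φ) γ g = dirDeriv f (OneParam.map φ hφ γ) (φ g) := by
  simp only [dirDeriv, Function.comp_apply, map_mul, OneParam.map_apply]

theorem HasDirDerivAt.comp_monoidHom (φ : G₁ →* G₂) (hφ : Continuous φ) {f : G₂ → Y}
    {γ : OneParam G₁} {g : G₁} {w : Y} (h : HasDirDerivAt f (OneParam.map φ hφ γ) (φ g) w) :
    HasDirDerivAt (f ∘ φ) γ g w := by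
  simpa only [HasDirDerivAt, Function.comp_apply, map_mul, OneParam.map_apply] using h

theorem iteratedD_comp_monoidHom (φ : G₁ →* G₂) (hφ : Continuous φ) (f : G₂ → Y) :
    ∀ (k : ℕ) (γ : Fin k → OneParam G₁),
      iteratedD (f ∘ φ) k γ = iteratedD f k (OneParam.map φ hφ ∘ γ) ∘ φ
  | 0, _ => rfl
  | k + 1, γ => by
    funext g
    rw [iteratedD, iteratedD_comp_monoidHom φ hφ f k, dirDeriv_comp_monoidHom φ hφ]
    rfl

theorem IsCSmooth.comp_monoidHom (φ : G₁ →* G₂) (hφ : Continuous φ) {f : G₂ → Y}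
    (hf : IsCSmooth f) : IsCSmooth (f ∘ φ) := by
  refine ⟨hf.1.comp hφ, fun k => ⟨fun γ g => ?_, ?_⟩⟩
  · rw [iteratedD_comp_monoidHom φ hφ f, iteratedD_comp_monoidHom φ hφ f]
    exact ((hf.2 k).1 (OneParam.map φ hφ ∘ γ) (φ g)).comp_monoidHom φ hφ
  · simp only [iteratedD_comp_monoidHom φ hφ f, Function.comp_apply]
    have hmap : Continuous fun p : (Fin (k + 1) → OneParam G₁) × G₁ =>
        (OneParam.map φ hφ ∘ p.1, φ p.2) :=
      (continuous_pi fun i => (OneParam.continuous_map φ hφ).comp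
        ((continuous_apply i).comp continuous_fst)).prodMk (hφ.comp continuous_snd)
    exact ((hf.2 k).2.comp hmap :)

namespace UnitaryRep

variable {H : Type*} [NormedAddCommGroup H] [InnerProductSpace ℂ H]

theorem smoothVec_subset_comp (π : UnitaryRep G₂ H) (φ : G₁ →* G₂) (hφ : Continuous φ) :
    π.smoothVec ⊆ (π.comp φ hφ).smoothVec :=
  fun _ hv => IsCSmooth.comp_monoidHom φ hφ hv

theorem dpi_comp (π : UnitaryRep G₂ H) (φ : G₁ →* G₂) (hφ : Continuous φ) (γ : OneParam G₁)
    (v : H) : (π.comp φ hφ).dpi γ v = π.dpi (OneParam.map φ hφ γ) v :=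
  (dirDeriv_comp_monoidHom φ hφ (fun g => π.toFun g v) γ 1).trans
    (congrArg (dirDeriv _ _) (map_one φ))

theorem momentMap_comp (π : UnitaryRep G₂ H) (φ : G₁ →* G₂) (hφ : Continuous φ) (v : H) :
    (π.comp φ hφ).momentMap v = π.momentMap v ∘ OneParam.map φ hφ := by
  funext γ
  simp only [momentMap, dpi_comp, Function.comp_apply]

theorem image_momentSet0_subset_comp (π : UnitaryRep G₂ H) (φ : G₁ →* G₂)
    (hφ : Continuous φ) :
    (· ∘ OneParam.map φ hφ) '' π.momentSet0 ⊆ (π.comp φ hφ).momentSet0 := by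
  rintro _ ⟨_, ⟨v, hv, rfl⟩, rfl⟩
  exact ⟨v, ⟨π.smoothVec_subset_comp φ hφ hv.1, hv.2⟩, π.momentMap_comp φ hφ v⟩

variable {G : Type*} [TopologicalSpace G] [Group G]

theorem continuous_iteratedD_smoothVecs (ρ : UnitaryRep G H) (k : ℕ)
    (γ : Fin k → OneParam G) (g : G) :
    Continuous fun v : ρ.SmoothVecs => iteratedD (fun x => ρ.toFun x v.1) k γ g := by
  have hD : Continuous fun f : SmoothFns G H => f.iteratedDCM k :=
    continuous_iInf_dom continuous_induced_dom
  have hA : Continuous ρ.smoothVecEmbed := continuous_induced_dom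
  exact (continuous_eval_const (γ, g)).comp (hD.comp hA)

theorem continuous_smoothVecs_val (ρ : UnitaryRep G H) :
    Continuous fun v : ρ.SmoothVecs => (v.1 : H) := by
  simpa only [iteratedD, ρ.map_one', one_apply_eq_self] using
    ρ.continuous_iteratedD_smoothVecs 0 Fin.elim0 1

theorem continuousAt_momentMap (ρ : UnitaryRep G H) {w : ρ.SmoothVecs} (hw : w.1 ≠ 0) :
    ContinuousAt (fun v : ρ.SmoothVecs => ρ.momentMap v.1) w := by
  have hval := ρ.continuous_smoothVecs_val
  refine continuousAt_pi.2 fun γ => Complex.continuous_re.continuousAt.comp ?_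
  refine (ContinuousAt.div ?_ ?_ ?_).div_const _
  · exact (continuous_inner.comp
      (hval.prodMk (ρ.continuous_iteratedD_smoothVecs 1 (fun _ => γ) 1))).continuousAt
  · exact (continuous_inner.comp (hval.prodMk hval)).continuousAt
  · simpa only [ne_eq, inner_self_eq_zero] using hw

theorem momentSet0_subset_closure_of_dense (ρ : UnitaryRep G H) {S : Set ρ.SmoothVecs}
    (hS : Dense S) :
    ρ.momentSet0 ⊆
      closure ((fun v : ρ.SmoothVecs => ρ.momentMap v.1) '' ({v | v.1 ≠ 0} ∩ S)) := by
  rintro _ ⟨v, ⟨hv, hv0⟩, rfl⟩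
  have hopen : IsOpen {u : ρ.SmoothVecs | u.1 ≠ 0} :=
    isOpen_compl_singleton.preimage ρ.continuous_smoothVecs_val
  exact (ρ.continuousAt_momentMap (w := ⟨v, hv⟩) hv0).continuousWithinAt.mem_closure_image
    (hS.open_subset_closure_inter hopen hv0)

end UnitaryRep

end PullBack

/-- Pull-back of moment sets along a continuous homomorphism `φ : G₁ → G₂`: with
`P : ℝ^{𝔏(G₂)} → ℝ^{𝔏(G₁)}`, `P(f) = f ∘ 𝔏(φ)`, one has `H_∞(π) ⊆ H_∞(π∘φ)` and
`P(I⁰_π) ⊆ I⁰_{π∘φ}`; if moreover `H_∞(π)` is dense in `H_∞(π∘φ)`, then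
`closure (P(I_π)) = I_{π∘φ}`, and if in addition `I_π` is convex then so is `I_{π∘φ}`. -/
theorem momentSet_comp
    (G₁ G₂ : Type*) [TopologicalSpace G₁] [Group G₁] [TopologicalSpace G₂] [Group G₂]
    (φ : G₁ →* G₂) (hφ : Continuous φ)
    (H : Type*) [NormedAddCommGroup H] [InnerProductSpace ℂ H]
    (π : UnitaryRep G₂ H)
    (P : (OneParam G₂ → ℝ) → (OneParam G₁ → ℝ))
    (hP : ∀ (f : OneParam G₂ → ℝ) (γ : OneParam G₁), P f γ = f (OneParam.map φ hφ γ)) :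
    π.smoothVec ⊆ (π.comp φ hφ).smoothVec ∧
      P '' π.momentSet0 ⊆ (π.comp φ hφ).momentSet0 ∧
      (Dense {w : (π.comp φ hφ).SmoothVecs | (w.1 : H) ∈ π.smoothVec} →
        closure (P '' π.momentSet) = (π.comp φ hφ).momentSet ∧
          (Convex ℝ π.momentSet → Convex ℝ (π.comp φ hφ).momentSet)) := by
  obtain rfl : P = (· ∘ OneParam.map φ hφ) := funext fun f => funext (hP f)
  refine ⟨π.smoothVec_subset_comp φ hφ, π.image_momentSet0_subset_comp φ hφ, fun hdense => ?_⟩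
  have hclosure : closure ((· ∘ OneParam.map φ hφ) '' π.momentSet) =
      (π.comp φ hφ).momentSet := by
    rw [UnitaryRep.momentSet, closure_image_closure (Pi.continuous_precomp _)]
    refine (closure_mono (π.image_momentSet0_subset_comp φ hφ)).antisymm
      (closure_minimal ?_ isClosed_closure)
    refine ((π.comp φ hφ).momentSet0_subset_closure_of_dense hdense).trans (closure_mono ?_)
    rintro _ ⟨u, ⟨hu0, hu⟩, rfl⟩
    exact ⟨_, ⟨u.1, ⟨hu, hu0⟩, rfl⟩, (π.momentMap_comp φ hφ u.1).symm⟩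
  refine ⟨hclosure, fun hconv => hclosure ▸ ?_⟩
  exact (hconv.linear_image (LinearMap.funLeft ℝ ℝ (OneParam.map φ hφ))).closure
end

section
/- Let G be a topological group and π : G → U(H) a continuous unitary representation. Then for every integer k ≥ 1, every compact set K ⊆ 𝔏(G)^k, and every smooth vector v ∈ H_∞, one has lim_{x→1} sup_{γ∈K} ‖dπ(γ)v − dπ(Ad_G(x)γ)v‖ = 0, where Ad_G(x)(γ₁,…,γ_k) := (xγ₁(·)x⁻¹, …, xγ_k(·)x⁻¹) and dπ(γ₁,…,γ_k) := dπ(γ₁)⋯dπ(γ_k). -/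
/-!
By equivariance of the orbit map `g ↦ π(g)v`, the vector `dπ(γ₁)⋯dπ(γ_k)v` is an iterated
directional derivative of the orbit map at `1`, so smoothness of `v` makes it jointly continuous
in `(γ₁, …, γ_k)`. Conjugation is continuous on `𝔏(G)`, hence `(x, γ) ↦ dπ(Ad_G(x)γ)v` is
continuous, and a jointly continuous function converges uniformly on compact sets as the
parameter `x` tends to `1`.
-/

open Filter Topology MeasureTheory
open scoped Topology

noncomputable section

/-- The adjoint action of `G` on `𝔏(G)`: `Ad_G(x)γ = xγ(·)x⁻¹`. -/
def OneParam.conj {G : Type*} [TopologicalSpace G] [Group G] [IsTopologicalGroup G]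
    (x : G) (γ : OneParam G) : OneParam G :=
  ⟨⟨fun t : ℝ => x * γ.1 t * x⁻¹,
      (continuous_const.mul (map_continuous γ.1)).mul continuous_const⟩,
    fun t s => by
      simp only [ContinuousMap.coe_mk, γ.2 t s]
      group⟩

/-- Iterated operators `dπ(γ₁)⋯dπ(γ_k)` on smooth vectors. -/
def UnitaryRep.dpiIter {G : Type*} [TopologicalSpace G] [Group G]
    {H : Type*} [NormedAddCommGroup H] [InnerProductSpace ℂ H]
    (π : UnitaryRep G H) : (k : ℕ) → (Fin k → OneParam G) → H → H
  | 0, _, v => v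
  | (k + 1), γ, v => π.dpi (γ 0) (π.dpiIter k (fun i => γ i.succ) v)

theorem Continuous.tendstoUniformlyOn_nhds_of_isCompact {X Y Z : Type*} [TopologicalSpace X]
    [TopologicalSpace Y] [UniformSpace Z] {f : X → Y → Z} (hf : Continuous ↿f) (x₀ : X)
    {K : Set Y} (hK : IsCompact K) : TendstoUniformlyOn f (f x₀) (𝓝 x₀) K :=
  ContinuousMap.tendsto_iff_forall_isCompact_tendstoUniformlyOn.1
    ((ContinuousMap.curry ⟨↿f, hf⟩).continuous.tendsto x₀) K hK

namespace OneParam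

variable {G : Type*} [TopologicalSpace G] [Group G] [IsTopologicalGroup G]

theorem conj_one (γ : OneParam G) : conj 1 γ = γ :=
  Subtype.ext <| ContinuousMap.ext fun t => by simp [conj]

theorem continuous_conj : Continuous fun p : G × OneParam G => conj p.1 p.2 := by
  refine Continuous.subtype_mk (ContinuousMap.continuous_of_continuous_uncurry _ ?_) _
  have heval : Continuous fun q : (G × OneParam G) × ℝ => q.1.2.1 q.2 :=
    continuous_eval.comp <|
      (continuous_subtype_val.comp (continuous_snd.comp continuous_fst)).prodMk continuous_snd
  exact ((continuous_fst.comp continuous_fst).mul heval).mul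
    (continuous_fst.comp continuous_fst).inv

end OneParam

namespace UnitaryRep

variable {G : Type*} [TopologicalSpace G] [Group G]
variable {H : Type*} [NormedAddCommGroup H] [InnerProductSpace ℂ H]
variable (π : UnitaryRep G H) {v : H}

theorem iteratedD_orbit_mul (hv : v ∈ π.smoothVec) (k : ℕ) (δ : Fin k → OneParam G)
    (g h : G) :
    iteratedD (fun g => π.toFun g v) k δ (g * h)
      = π.toFun g (iteratedD (fun g => π.toFun g v) k δ h) := by
  induction k generalizing h with
  | zero => simp [iteratedD, π.map_mul']
  | succ k ih =>
    refine Tendsto.limUnder_eq ?_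
    refine ((π.toFun g).continuous.tendsto _ |>.comp ((hv.2 k).1 δ h)).congr fun t => ?_
    simp only [Function.comp_apply, ContinuousLinearMap.map_smul_of_tower, map_sub, mul_assoc,
      ih]

theorem dpiIter_eq_iteratedD (hv : v ∈ π.smoothVec) (k : ℕ) (γ : Fin k → OneParam G) :
    π.dpiIter k γ v = iteratedD (fun g => π.toFun g v) k (fun i => γ i.rev) 1 := by
  induction k with
  | zero => simp [dpiIter, iteratedD, π.map_one']
  | succ k ih =>
    simp only [dpiIter, iteratedD, Fin.rev_castSucc, Fin.rev_last, ih]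
    refine congrArg (limUnder _) (funext fun t => ?_)
    -- by equivariance, near `1` the inner iterated derivative is the orbit map of `dpiIter k _ v`
    have h := π.iteratedD_orbit_mul hv k (fun i => γ i.rev.succ) ((γ 0).1 t) 1
    rw [mul_one] at h
    simp [π.map_one', h]

theorem continuous_dpiIter (hv : v ∈ π.smoothVec) (k : ℕ) :
    Continuous fun γ : Fin k → OneParam G => π.dpiIter k γ v := by
  simp only [π.dpiIter_eq_iteratedD hv]
  exact (IsCSmooth.continuous_iteratedD hv k).comp
    ((continuous_pi fun i => continuous_apply i.rev).prodMk continuous_const)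

end UnitaryRep

theorem dpiIter_conj_tendsto_uniformly_on_compact_general
    (G : Type*) [TopologicalSpace G] [Group G] [IsTopologicalGroup G]
    (H : Type*) [NormedAddCommGroup H] [InnerProductSpace ℂ H]
    (π : UnitaryRep G H)
    (k : ℕ)
    (K : Set (Fin k → OneParam G)) (hK : IsCompact K)
    (v : H) (hv : v ∈ π.smoothVec) :
    ∀ ε > (0 : ℝ), ∀ᶠ x in 𝓝 (1 : G), ∀ γ ∈ K,
      ‖π.dpiIter k γ v - π.dpiIter k (fun i => OneParam.conj x (γ i)) v‖ < ε := by
  have hcont : Continuous fun p : G × (Fin k → OneParam G) =>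
      π.dpiIter k (fun i => OneParam.conj p.1 (p.2 i)) v :=
    (π.continuous_dpiIter hv k).comp <| continuous_pi fun i =>
      OneParam.continuous_conj.comp <| continuous_fst.prodMk <| (continuous_apply i).comp
        continuous_snd
  have hunif := hcont.tendstoUniformlyOn_nhds_of_isCompact (f := fun x γ =>
    π.dpiIter k (fun i => OneParam.conj x (γ i)) v) 1 hK
  simp only [OneParam.conj_one] at hunif
  intro ε hε
  simpa only [dist_eq_norm] using Metric.tendstoUniformlyOn_iff.1 hunif ε hε

/-- For every `k ≥ 1`, every compact `K ⊆ 𝔏(G)^k` and every smooth vector `v`, one has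
`lim_{x→1} sup_{γ ∈ K} ‖dπ(γ)v − dπ(Ad_G(x)γ)v‖ = 0`, phrased as: for every `ε > 0`,
eventually as `x → 1` one has `‖dπ(γ)v − dπ(Ad_G(x)γ)v‖ < ε` for all `γ ∈ K`. -/
theorem dpiIter_conj_tendsto_uniformly_on_compact
    (G : Type*) [TopologicalSpace G] [Group G] [IsTopologicalGroup G]
    (H : Type*) [NormedAddCommGroup H] [InnerProductSpace ℂ H]
    (π : UnitaryRep G H)
    (k : ℕ) (hk : 1 ≤ k)
    (K : Set (Fin k → OneParam G)) (hK : IsCompact K)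
    (v : H) (hv : v ∈ π.smoothVec) :
    ∀ ε > (0 : ℝ), ∀ᶠ x in 𝓝 (1 : G), ∀ γ ∈ K,
      ‖π.dpiIter k γ v - π.dpiIter k (fun i => OneParam.conj x (γ i)) v‖ < ε :=
  dpiIter_conj_tendsto_uniformly_on_compact_general G H π k K hK v hv

end
end
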